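/- The functions x ↦ sint²(x²) and x ↦ x²·sint²(x²) are integrable on ℝ, and the constants A₁ := ∫_ℝ sint²(x²) dx and A₂ := ∫_ℝ x² sint²(x²) dx are strictly positive and finite. -/

import Mathlib

/-!
Both integrands are continuous, even and nonnegative, and `sint 1 ≥ 1 - 2 / π > 0`, so positivity
follows from integrability, which in turn follows from the decay `|sint y| ≤ 2 / y`, a quantitative
form of the Dirichlet integral `∫₀^∞ sinc = π / 2`.

For the latter, `∫₀^{(2n+1)π/2} sinc = ∫₀^{π/2} sin ((2n+1) u) / u du`. Replacing `1 / u` by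
`1 / sin u` turns the integrand into the Dirichlet kernel, whose integral is `π / 2`; the error
term involves the bounded function `1 / sin u - 1 / u` and vanishes in the limit by the
Riemann–Lebesgue lemma. Integration by parts against `t⁻¹` bounds the tails `∫ₐᵇ sinc` by `2 / a`,
which passes from this sequence to every `x > 0`.
-/

open MeasureTheory Real

/-- `sinc x = sin x / x` for `x ≠ 0`, and `sinc 0 = 1`. -/
noncomputable def sinc (x : ℝ) : ℝ := if x = 0 then 1 else Real.sin x / x

/-- `sint x = 1 − (2/π) ∫₀ˣ sinc t dt`. -/
noncomputable def sint (x : ℝ) : ℝ := 1 - (2 / Real.pi) * ∫ t in (0:ℝ)..x, _root_.sinc t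

open Filter Set Topology Asymptotics

theorem tendsto_integral_sin_mul_atTop {f : ℝ → ℝ} (hf : Integrable f) :
    Tendsto (fun c => ∫ x, sin (c * x) * f x) atTop (𝓝 0) := by
  have hw : Tendsto (fun c : ℝ => -(c / (2 * π))) atTop (cocompact ℝ) :=
    (tendsto_neg_atTop_atBot.comp (tendsto_id.atTop_div_const (by positivity))).mono_right
      (by rw [cocompact_eq_atBot_atTop]; exact le_sup_left)
  have hRL := (Complex.continuous_im.tendsto 0).comp
    ((Real.tendsto_integral_exp_smul_cocompact fun x => (f x : ℂ)).comp hw)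
  rw [Complex.zero_im] at hRL
  -- at frequency `-c / (2π)` the imaginary part of the Fourier integral of `f` is `∫ sin (c x) f x`
  refine hRL.congr fun c => ?_
  have hint := (Real.fourierIntegral_convergent_iff (-(c / (2 * π)))).2 (hf.ofReal (𝕜 := ℂ))
  simp only [Real.inner_apply] at hint
  refine (integral_im hint).symm.trans (integral_congr_ae (ae_of_all _ fun x => ?_))
  have hπ : π ≠ 0 := pi_ne_zero
  simp only [Circle.smul_def, Real.fourierChar_apply, smul_eq_mul, RCLike.im_to_complex]
  have harg : 2 * π * -(x * -(c / (2 * π))) = c * x := by field_simp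
  rw [harg, Complex.mul_im, Complex.exp_ofReal_mul_I_re, Complex.exp_ofReal_mul_I_im]
  simp

theorem tendsto_setIntegral_sin_mul_atTop {f : ℝ → ℝ} {s : Set ℝ} (hs : MeasurableSet s)
    (hf : IntegrableOn f s) : Tendsto (fun c => ∫ x in s, sin (c * x) * f x) atTop (𝓝 0) := by
  simpa only [← integral_indicator hs, indicator_mul_right] using
    tendsto_integral_sin_mul_atTop ((integrable_indicator_iff hs).2 hf)

theorem intervalIntegrable_inv_sq {a b : ℝ} (h : (0 : ℝ) ∉ uIcc a b) :
    IntervalIntegrable (fun t : ℝ => (t ^ 2)⁻¹) volume a b :=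
  ContinuousOn.intervalIntegrable <| (continuousOn_id.pow 2).inv₀ fun _ ht =>
    pow_ne_zero 2 fun h0 => h (h0 ▸ ht)

theorem integral_inv_sq {a b : ℝ} (h : (0 : ℝ) ∉ uIcc a b) :
    ∫ t in a..b, (t ^ 2)⁻¹ = a⁻¹ - b⁻¹ := by
  rw [intervalIntegral.integral_eq_sub_of_hasDerivAt (f := fun t => -t⁻¹)
    (fun t ht => by simpa using (hasDerivAt_inv fun h0 => h (h0 ▸ ht)).fun_neg)
    (intervalIntegrable_inv_sq h)]
  ring

theorem abs_integral_sinc_le {a b : ℝ} (ha : 0 < a) (hab : a ≤ b) :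
    |∫ t in a..b, Real.sinc t| ≤ 2 / a := by
  have hb : 0 < b := ha.trans_le hab
  have h0 : (0 : ℝ) ∉ uIcc a b := fun h => ha.not_ge (uIcc_of_le hab ▸ h).1
  have hne : ∀ t ∈ uIcc a b, t ≠ 0 := fun t ht h => h0 (h ▸ ht)
  have hsinc : ∫ t in a..b, Real.sinc t = ∫ t in a..b, t⁻¹ * sin t :=
    intervalIntegral.integral_congr fun t ht => by
      rw [Real.sinc_of_ne_zero (hne t ht), div_eq_inv_mul]
  have hparts := intervalIntegral.integral_mul_deriv_eq_deriv_mul_of_hasDerivAt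
    (a := a) (b := b) (u := fun t => t⁻¹) (v := fun t => -cos t)
    (u' := fun t => -(t ^ 2)⁻¹) (v' := sin) (continuousOn_inv₀.mono fun t ht => hne t ht)
    continuous_cos.neg.continuousOn
    (fun t ht => hasDerivAt_inv (hne t (Ioo_subset_Icc_self ht)))
    (fun t _ => by simpa using (hasDerivAt_cos t).fun_neg)
    (intervalIntegrable_inv_sq h0).neg (continuous_sin.intervalIntegrable a b)
  have hrest : |∫ t in a..b, -(t ^ 2)⁻¹ * -cos t| ≤ a⁻¹ - b⁻¹ := by
    rw [← integral_inv_sq h0, ← Real.norm_eq_abs]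
    refine intervalIntegral.norm_integral_le_of_norm_le hab (ae_of_all _ fun t _ => ?_)
      (intervalIntegrable_inv_sq h0)
    simpa [abs_mul] using
      mul_le_mul_of_nonneg_left (abs_cos_le_one t) (by positivity : 0 ≤ (t ^ 2)⁻¹)
  have hcos : ∀ x, |x⁻¹ * -cos x| ≤ |x⁻¹| := fun x => by
    simpa [abs_mul] using mul_le_mul_of_nonneg_left (abs_cos_le_one x) (abs_nonneg x⁻¹)
  rw [hsinc, hparts]
  calc |b⁻¹ * -cos b - a⁻¹ * -cos a - ∫ t in a..b, -(t ^ 2)⁻¹ * -cos t|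
      ≤ |b⁻¹ * -cos b| + |a⁻¹ * -cos a| + |∫ t in a..b, -(t ^ 2)⁻¹ * -cos t| :=
        (abs_sub _ _).trans (add_le_add_left (abs_sub _ _) _)
    _ ≤ b⁻¹ + a⁻¹ + (a⁻¹ - b⁻¹) := by
        gcongr
        · simpa [abs_of_pos hb] using hcos b
        · simpa [abs_of_pos ha] using hcos a
    _ = 2 / a := by ring

noncomputable def dirichletKernel (n : ℕ) (u : ℝ) : ℝ :=
  1 + 2 * ∑ k ∈ Finset.range n, cos (2 * u * k + 2 * u)

theorem continuous_dirichletKernel (n : ℕ) : Continuous (dirichletKernel n) := by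
  unfold dirichletKernel
  fun_prop

theorem sin_mul_dirichletKernel (n : ℕ) (u : ℝ) :
    sin u * dirichletKernel n u = sin ((2 * n + 1) * u) := by
  have h := sin_mul_sum_cos n (2 * u) (2 * u)
  rw [mul_div_cancel_left₀ u two_ne_zero] at h
  have hsub : n * (2 * u) / 2 - ((n - 1) * (2 * u) / 2 + 2 * u) = -u := by ring
  have hadd : n * (2 * u) / 2 + ((n - 1) * (2 * u) / 2 + 2 * u) = (2 * n + 1) * u := by ring
  rw [dirichletKernel, mul_add, mul_one, mul_left_comm, h, ← mul_assoc, two_mul_sin_mul_cos,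
    hsub, hadd, sin_neg]
  ring

theorem integral_cos_two_mul_succ_mul_eq_zero (k : ℕ) :
    ∫ u in (0 : ℝ)..π / 2, cos (2 * u * k + 2 * u) = 0 := by
  have hc : (2 * k + 2 : ℝ) ≠ 0 := by positivity
  have harg : (2 * k + 2) * (π / 2) = (k + 1 : ℕ) * π := by push_cast; ring
  simp_rw [show ∀ u : ℝ, 2 * u * k + 2 * u = (2 * k + 2) * u from fun u => by ring]
  rw [intervalIntegral.integral_comp_mul_left cos hc, integral_cos, harg, sin_nat_mul_pi]
  simp

theorem integral_dirichletKernel (n : ℕ) :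
    ∫ u in (0 : ℝ)..π / 2, dirichletKernel n u = π / 2 := by
  have hcos : ∀ k ∈ Finset.range n,
      IntervalIntegrable (fun u : ℝ => cos (2 * u * k + 2 * u)) volume 0 (π / 2) :=
    fun k _ => by apply Continuous.intervalIntegrable; fun_prop
  simp only [dirichletKernel]
  rw [intervalIntegral.integral_add intervalIntegrable_const
      (by apply Continuous.intervalIntegrable; fun_prop),
    intervalIntegral.integral_const_mul, intervalIntegral.integral_finsetSum hcos]
  simp [integral_cos_two_mul_succ_mul_eq_zero]

theorem abs_inv_sin_sub_inv_le_one {u : ℝ} (h0 : 0 < u) (hu : u ≤ π / 2) :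
    |(sin u)⁻¹ - u⁻¹| ≤ 1 := by
  have hsin : 0 < sin u := sin_pos_of_pos_of_lt_pi h0 (hu.trans_lt (by linarith [pi_pos]))
  have hjordan := mul_le_sin h0.le hu
  have hcube := sin_gt_sub_cube h0
  rw [inv_sub_inv hsin.ne' h0.ne', abs_of_nonneg (div_nonneg (by linarith [sin_le h0.le])
    (by positivity)), div_le_one (by positivity)]
  have h2pi : 1 / 2 ≤ 2 / π := by rw [le_div_iff₀ pi_pos]; linarith [pi_le_four]
  have hcube_le : u ^ 3 / 6 ≤ 2 / π * u * u := by nlinarith [pi_le_four, mul_pos h0 h0]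
  nlinarith [mul_le_mul_of_nonneg_right hjordan h0.le]

theorem integrableOn_inv_sin_sub_inv :
    IntegrableOn (fun u => (sin u)⁻¹ - u⁻¹) (Ioc 0 (π / 2)) :=
  Measure.integrableOn_of_bounded (M := 1) measure_Ioc_lt_top.ne
    (by fun_prop) ((ae_restrict_iff' measurableSet_Ioc).2 (ae_of_all _ fun _ hu =>
      abs_inv_sin_sub_inv_le_one hu.1 hu.2))

noncomputable def sineIntegral (x : ℝ) : ℝ := ∫ t in (0 : ℝ)..x, Real.sinc t

theorem continuous_sineIntegral : Continuous sineIntegral :=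
  intervalIntegral.continuous_primitive (fun _ _ => continuous_sinc.intervalIntegrable _ _) 0

theorem sineIntegral_odd_mul_pi_div_two (n : ℕ) :
    sineIntegral ((2 * n + 1) * (π / 2)) =
      π / 2 - ∫ u in (0 : ℝ)..π / 2, sin ((2 * n + 1) * u) * ((sin u)⁻¹ - u⁻¹) := by
  set N : ℝ := 2 * n + 1 with hN
  have hN0 : 0 < N := by positivity
  have hkernel : ∀ u ∈ Ioc 0 (π / 2), N * Real.sinc (N * u) =
      dirichletKernel n u - sin (N * u) * ((sin u)⁻¹ - u⁻¹) := fun u ⟨h0, hu⟩ => by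
    have hsin : 0 < sin u := sin_pos_of_pos_of_lt_pi h0 (hu.trans_lt (by linarith [pi_pos]))
    have hD : dirichletKernel n u = sin (N * u) / sin u := by
      rw [hN, ← sin_mul_dirichletKernel]
      field_simp
    rw [Real.sinc_of_ne_zero (by positivity), hD]
    field_simp
    ring
  have hint : IntegrableOn (fun u => sin (N * u) * ((sin u)⁻¹ - u⁻¹)) (Ioc 0 (π / 2)) :=
    integrableOn_inv_sin_sub_inv.bdd_mul (c := 1) (by fun_prop)
      (ae_of_all _ fun _ => abs_sin_le_one _)
  have hscale := intervalIntegral.smul_integral_comp_mul_left (a := 0) (b := π / 2) Real.sinc N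
  rw [smul_eq_mul, mul_zero] at hscale
  calc sineIntegral (N * (π / 2)) = ∫ u in (0 : ℝ)..π / 2, N * Real.sinc (N * u) := by
        rw [intervalIntegral.integral_const_mul, hscale, sineIntegral]
    _ = ∫ u in (0 : ℝ)..π / 2, (dirichletKernel n u - sin (N * u) * ((sin u)⁻¹ - u⁻¹)) :=
        intervalIntegral.integral_congr_ae (ae_of_all _ fun u hu =>
          hkernel u (uIoc_of_le pi_div_two_pos.le ▸ hu))
    _ = π / 2 - ∫ u in (0 : ℝ)..π / 2, sin (N * u) * ((sin u)⁻¹ - u⁻¹) := by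
        rw [intervalIntegral.integral_sub ((continuous_dirichletKernel n).intervalIntegrable _ _)
          ((intervalIntegrable_iff_integrableOn_Ioc_of_le (by positivity)).2 hint),
          integral_dirichletKernel]

theorem tendsto_two_mul_add_one_atTop : Tendsto (fun n : ℕ => (2 * n + 1 : ℝ)) atTop atTop :=
  tendsto_atTop_add_const_right _ _ (tendsto_natCast_atTop_atTop.const_mul_atTop two_pos)

theorem tendsto_sineIntegral_odd_mul_pi_div_two :
    Tendsto (fun n : ℕ => sineIntegral ((2 * n + 1) * (π / 2))) atTop (𝓝 (π / 2)) := by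
  have hRL := (tendsto_setIntegral_sin_mul_atTop measurableSet_Ioc
    integrableOn_inv_sin_sub_inv).comp tendsto_two_mul_add_one_atTop
  simp_rw [sineIntegral_odd_mul_pi_div_two]
  simpa [intervalIntegral.integral_of_le pi_div_two_pos.le] using tendsto_const_nhds.sub hRL

theorem abs_pi_div_two_sub_sineIntegral_le {x : ℝ} (hx : 0 < x) :
    |π / 2 - sineIntegral x| ≤ 2 / x := by
  refine le_of_tendsto ((tendsto_sineIntegral_odd_mul_pi_div_two.sub_const _).abs)
    (((tendsto_two_mul_add_one_atTop.atTop_mul_const pi_div_two_pos).eventually_ge_atTop x).mono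
      fun n hn => ?_)
  rw [sineIntegral, sineIntegral, intervalIntegral.integral_interval_sub_left
    (continuous_sinc.intervalIntegrable _ _) (continuous_sinc.intervalIntegrable _ _)]
  exact abs_integral_sinc_le hx hn

theorem Continuous.integrable_of_even_of_isBigO_rpow {E : Type*} [NormedAddCommGroup E]
    {f : ℝ → E} (hf : Continuous f) (heven : ∀ x, f (-x) = f x) {s : ℝ} (hs : 1 < s)
    (ho : f =O[atTop] fun x => x ^ (-s)) : Integrable f :=
  hf.locallyIntegrable.integrable_of_isBigO_atTop_of_norm_isNegInvariant
    (ae_of_all _ fun x => by simp [heven]) ho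
    (integrableAtFilter_rpow_atTop_iff.2 (by linarith))

-- `sinc` above is definitionally Mathlib's `Real.sinc`.
theorem sint_eq_one_sub_sineIntegral (x : ℝ) : sint x = 1 - 2 / π * sineIntegral x := rfl

theorem continuous_sint : Continuous sint :=
  continuous_const.sub (continuous_const.mul continuous_sineIntegral)

theorem abs_sint_le {y : ℝ} (hy : 0 < y) : |sint y| ≤ 2 / y := by
  have hπ : 2 / π ≤ 1 := by rw [div_le_one pi_pos]; linarith [pi_gt_three]
  have hsint : sint y = 2 / π * (π / 2 - sineIntegral y) := by
    rw [sint_eq_one_sub_sineIntegral]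
    field_simp
  calc |sint y| = 2 / π * |π / 2 - sineIntegral y| := by
        rw [hsint, abs_mul, abs_of_pos (by positivity)]
    _ ≤ 1 * (2 / y) := by
        gcongr
        exact abs_pi_div_two_sub_sineIntegral_le hy
    _ = 2 / y := one_mul _

theorem one_sub_two_div_pi_mul_le_sint {y : ℝ} (hy : 0 ≤ y) : 1 - 2 / π * y ≤ sint y := by
  have hSi : sineIntegral y ≤ y := by
    simpa [sineIntegral] using intervalIntegral.integral_mono_on hy
      (continuous_sinc.intervalIntegrable _ _) (intervalIntegrable_const (μ := volume))
      fun t _ => sinc_le_one t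
  rw [sint_eq_one_sub_sineIntegral]
  gcongr

theorem sint_one_pos : 0 < sint 1 := by
  have hπ : 2 / π < 1 := by rw [div_lt_one pi_pos]; linarith [pi_gt_three]
  linarith [one_sub_two_div_pi_mul_le_sint zero_le_one]

theorem isBigO_sq_mul_sint_sq :
    (fun x : ℝ => x ^ 2 * sint (x ^ 2) ^ 2) =O[atTop] fun x => x ^ (-2 : ℝ) := by
  refine IsBigO.of_bound 4 ((eventually_gt_atTop 0).mono fun x hx => ?_)
  have hx2 : 0 < x ^ 2 := by positivity
  have hsq : sint (x ^ 2) ^ 2 ≤ (2 / x ^ 2) ^ 2 := sq_le_sq' (abs_le.1 (abs_sint_le hx2)).1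
    (abs_le.1 (abs_sint_le hx2)).2
  rw [Real.norm_of_nonneg (by positivity), Real.norm_of_nonneg (by positivity),
    rpow_neg hx.le, rpow_two]
  calc x ^ 2 * sint (x ^ 2) ^ 2 ≤ x ^ 2 * (2 / x ^ 2) ^ 2 := by gcongr
    _ = 4 * (x ^ 2)⁻¹ := by field_simp; ring

theorem isBigO_sint_sq_sq_mul :
    (fun x : ℝ => sint (x ^ 2) ^ 2) =O[atTop] fun x => x ^ 2 * sint (x ^ 2) ^ 2 := by
  refine IsBigO.of_bound 1 ((eventually_ge_atTop 1).mono fun x hx => ?_)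
  rw [Real.norm_of_nonneg (by positivity), Real.norm_of_nonneg (by positivity), one_mul]
  exact le_mul_of_one_le_left (sq_nonneg _) (one_le_pow₀ hx)

theorem sint_sq_integrable_and_pos :
    Integrable (fun x : ℝ => (sint (x ^ 2)) ^ 2) ∧
    Integrable (fun x : ℝ => x ^ 2 * (sint (x ^ 2)) ^ 2) ∧
    0 < ∫ x : ℝ, (sint (x ^ 2)) ^ 2 ∧
    0 < ∫ x : ℝ, x ^ 2 * (sint (x ^ 2)) ^ 2 := by
  have hc1 : Continuous fun x : ℝ => sint (x ^ 2) ^ 2 :=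
    (continuous_sint.comp (continuous_pow 2)).pow 2
  have hc2 : Continuous fun x : ℝ => x ^ 2 * sint (x ^ 2) ^ 2 := (continuous_pow 2).mul hc1
  have hint1 := hc1.integrable_of_even_of_isBigO_rpow (fun x => by simp) one_lt_two
    (isBigO_sint_sq_sq_mul.trans isBigO_sq_mul_sint_sq)
  have hint2 := hc2.integrable_of_even_of_isBigO_rpow (fun x => by simp) one_lt_two
    isBigO_sq_mul_sint_sq
  have hsint1 : sint (1 ^ 2) ^ 2 ≠ 0 := by simpa using sint_one_pos.ne'
  refine ⟨hint1, hint2, integral_pos_of_integrable_nonneg_nonzero hc1 hint1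
    (fun _ => sq_nonneg _) hsint1, integral_pos_of_integrable_nonneg_nonzero hc2 hint2
    (fun _ => by positivity) (x := 1) (by simpa using hsint1)⟩
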